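/- For every λ-critical boolean function f : {0,1}^n → {0,1}, every p ∈ [0,1], and the p-random restriction R_p: E_{ρ∼R_p}[|supp(ρ)| + D(f|_ρ)] ≤ n(1−p) + Σ_{t=1}^{n} (pλ)^t. In particular, if pλ < 1, then D_ave(f) ≤ n(1−p) + pλ/(1−pλ). -/

import Mathlib

/-- Decision trees over `n` boolean variables. -/
inductive DTree (n : ℕ) : Type where
  | leaf : Bool → DTree n
  | node : Fin n → DTree n → DTree n → DTree n

namespace DTree

/-- Evaluate a decision tree on an input. -/
def eval {n : ℕ} : DTree n → (Fin n → Bool) → Bool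
  | leaf b, _ => b
  | node i t0 t1, x => if x i then eval t1 x else eval t0 x

/-- Number of queries made on input `x`. -/
def cost {n : ℕ} : DTree n → (Fin n → Bool) → ℕ
  | leaf _, _ => 0
  | node i t0 t1, x => 1 + (if x i then cost t1 x else cost t0 x)

/-- Depth of a decision tree. -/
def depth {n : ℕ} : DTree n → ℕ
  | leaf _ => 0
  | node _ t0 t1 => 1 + max (depth t0) (depth t1)

end DTree

/-- `T` computes `f` with zero error. -/
def Computes {n : ℕ} (T : DTree n) (f : (Fin n → Bool) → Bool) : Prop :=
  ∀ x, T.eval x = f x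

/-- Average cost of a decision tree under the uniform distribution. -/
noncomputable def avgCost {n : ℕ} (T : DTree n) : ℝ :=
  (∑ x : Fin n → Bool, (T.cost x : ℝ)) / 2 ^ n

/-- Average-case deterministic query complexity under the uniform distribution. -/
noncomputable def Dave {n : ℕ} (f : (Fin n → Bool) → Bool) : ℝ :=
  sInf {c : ℝ | ∃ T : DTree n, Computes T f ∧ avgCost T = c}

/-- Worst-case deterministic query complexity. -/
noncomputable def Dworst {n : ℕ} (f : (Fin n → Bool) → Bool) : ℕ :=
  sInf {d : ℕ | ∃ T : DTree n, Computes T f ∧ T.depth = d}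

/-- The weight of a boolean function: the number of inputs mapped to `true`. -/
def wt {n : ℕ} (f : (Fin n → Bool) → Bool) : ℕ :=
  (Finset.univ.filter fun x : Fin n → Bool => f x = true).card

/-- `S` is a certificate of `f` on input `x`. -/
def IsCert {n : ℕ} (f : (Fin n → Bool) → Bool) (x : Fin n → Bool) (S : Finset (Fin n)) : Prop :=
  ∀ y : Fin n → Bool, (∀ i ∈ S, y i = x i) → f y = f x

/-- Certificate complexity of `f` on input `x`. -/
noncomputable def certC {n : ℕ} (f : (Fin n → Bool) → Bool) (x : Fin n → Bool) : ℕ :=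
  sInf {k : ℕ | ∃ S : Finset (Fin n), IsCert f x S ∧ S.card = k}

/-- The weight of the subfunction `f|ρ`, where `ρ : Fin n → Option Bool` is a restriction:
the number of inputs consistent with `ρ` on which `f` outputs `true`. -/
def wtR {n : ℕ} (f : (Fin n → Bool) → Bool) (ρ : Fin n → Option Bool) : ℕ :=
  (Finset.univ.filter fun x : Fin n → Bool =>
    f x = true ∧ ∀ i : Fin n, ∀ b : Bool, ρ i = some b → x i = b).card

/-- Number of coordinates fixed by a restriction. -/
def suppCard {n : ℕ} (ρ : Fin n → Option Bool) : ℕ :=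
  (Finset.univ.filter fun i : Fin n => (ρ i).isSome).card

/-- The restriction given by the first `j` steps of a decision-tree path `L`. -/
def PathRho {n : ℕ} (L : List (Fin n × Bool)) (j : ℕ) : Fin n → Option Bool :=
  fun i => (L.take j).lookup i

/-- The path `L` is `δ`-parity with respect to `f`. -/
def DeltaParityPath {n : ℕ} (f : (Fin n → Bool) → Bool) (δ : ℝ)
    (L : List (Fin n × Bool)) : Prop :=
  ∀ j : ℕ, 1 ≤ j → j ≤ L.length →
    (1/2) * (1 - δ) * (wtR f (PathRho L (j-1)) : ℝ) ≤ (wtR f (PathRho L j) : ℝ) ∧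
    (wtR f (PathRho L j) : ℝ) ≤ (1/2) * (1 + δ) * (wtR f (PathRho L (j-1)) : ℝ)

/-- `f` is a `(t,δ)`-parity function: every path of length at most `t` is δ-parity. -/
def ParityFun {n : ℕ} (f : (Fin n → Bool) → Bool) (t : ℕ) (δ : ℝ) : Prop :=
  ∀ L : List (Fin n × Bool), (L.map Prod.fst).Nodup → L.length ≤ t → DeltaParityPath f δ L

/-- The subfunction `f|ρ`, viewed as a function on the full cube. -/
def restrictFun {n : ℕ} (f : (Fin n → Bool) → Bool) (ρ : Fin n → Option Bool) :
    (Fin n → Bool) → Bool :=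
  fun x => f fun i => (ρ i).getD (x i)

/-- Probability mass of the restriction `ρ` under the `p`-random restriction `R_p`. -/
noncomputable def rpMass {n : ℕ} (p : ℝ) (ρ : Fin n → Option Bool) : ℝ :=
  ∏ i : Fin n, if (ρ i).isSome then (1 - p) / 2 else p

/-- `f` is `λ`-critical. -/
def IsCritical {n : ℕ} (lam : ℝ) (f : (Fin n → Bool) → Bool) : Prop :=
  ∀ p : ℝ, 0 ≤ p → p ≤ 1 → ∀ t : ℕ,
    (∑ ρ : Fin n → Option Bool,
      if t ≤ Dworst (restrictFun f ρ) then rpMass p ρ else 0) ≤ (p * lam) ^ t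


/-!
Sample `ρ ∼ R_p` in two stages: first the pattern `s` of fixed coordinates (each fixed with
probability `1 - p`), then a uniform input `x` supplying the fixed values. By linearity,
`E|supp ρ| = n(1 - p)`, and `E D(f|ρ) = ∑_{t ≥ 1} Pr[D(f|ρ) ≥ t] ≤ ∑_t (pλ)^t` by criticality.
For a fixed pattern `s`, querying the coordinates in `s` and then running an optimal tree for
`f|ρ` computes `f` exactly, at uniform average cost `E_x[|supp ρ| + D(f|ρ)]`; averaging over `s`
bounds `D_ave(f)` by `E_ρ[|supp ρ| + D(f|ρ)]`.
-/

open Finset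

section ProductWeights

variable {ι β γ : Type*} [Fintype ι] [DecidableEq ι] [Fintype β]

lemma sum_prod_eq_one {w : β → ℝ} (hw : ∑ b, w b = 1) : ∑ ρ : ι → β, ∏ j, w (ρ j) = 1 := by
  rw [← Fintype.prod_sum (fun _ => w)]
  simp [hw]

lemma sum_prod_mul_apply {w : β → ℝ} (hw : ∑ b, w b = 1) (g : β → ℝ) (i : ι) :
    ∑ ρ : ι → β, (∏ j, w (ρ j)) * g (ρ i) = ∑ b, w b * g b := by
  have hsplit : ∀ ρ : ι → β,
      (∏ j, w (ρ j)) * g (ρ i) = ∏ j, w (ρ j) * if j = i then g (ρ j) else 1 := by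
    intro ρ
    rw [prod_mul_distrib, prod_ite_eq']
    simp
  simp_rw [hsplit, ← Fintype.prod_sum (fun j b => w b * if j = i then g b else 1)]
  calc ∏ j, ∑ b, w b * (if j = i then g b else 1)
      = ∏ j, if j = i then ∑ b, w b * g b else 1 :=
        prod_congr rfl fun j _ => by split_ifs <;> simp [hw]
    _ = ∑ b, w b * g b := by simp

lemma sum_prod_mul_comp_eq [Fintype γ] [DecidableEq γ] (e : β → γ) (v : β → ℝ) (w : γ → ℝ)
    (hw : ∀ c, ∑ b with e b = c, v b = w c) (A : (ι → γ) → ℝ) :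
    ∑ y : ι → β, (∏ i, v (y i)) * A (e ∘ y) = ∑ ρ : ι → γ, (∏ i, w (ρ i)) * A ρ := by
  rw [← sum_fiberwise univ (fun y => e ∘ y)]
  refine sum_congr rfl fun ρ _ => ?_
  have hfiber :
      ({y | e ∘ y = ρ} : Finset (ι → β)) = Fintype.piFinset fun i => {b | e b = ρ i} := by
    ext y
    simp [funext_iff]
  rw [sum_congr rfl fun y hy => by rw [(mem_filter.1 hy).2], ← sum_mul, hfiber,
    ← prod_univ_sum]
  simp only [hw]

end ProductWeights

lemma natCast_mul_eq_sum_Icc_ite {m N : ℕ} (hm : m ≤ N) (a : ℝ) :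
    m * a = ∑ t ∈ Icc 1 N, if t ≤ m then a else 0 := by
  have hlevel : {t ∈ Icc 1 N | t ≤ m} = Icc 1 m := by
    ext
    simp only [mem_filter, mem_Icc]
    omega
  simp [← sum_filter, hlevel]

lemma sum_Icc_one_pow_le {q : ℝ} (hq0 : 0 ≤ q) (hq1 : q < 1) (N : ℕ) :
    ∑ t ∈ Icc 1 N, q ^ t ≤ q / (1 - q) := by
  simpa [← Ico_add_one_right_eq_Icc] using
    geom_sum_Ico_le_of_lt_one (m := 1) (n := N + 1) hq0 hq1

section Restriction

variable {n : ℕ}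

def fixAlong (L : List (Fin n)) (x : Fin n → Bool) (ρ : Fin n → Option Bool) :
    Fin n → Option Bool :=
  fun j => if j ∈ L then some (x j) else ρ j

@[simp]
lemma fixAlong_nil (x : Fin n → Bool) (ρ : Fin n → Option Bool) : fixAlong [] x ρ = ρ := by
  funext j
  simp [fixAlong]

lemma fixAlong_cons (i : Fin n) (L : List (Fin n)) (x : Fin n → Bool) (ρ : Fin n → Option Bool) :
    fixAlong (i :: L) x ρ = fixAlong L x (Function.update ρ i (some (x i))) := by
  funext j
  by_cases hji : j = i
  · subst hji
    simp [fixAlong]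
  · simp [fixAlong, hji]

end Restriction

namespace DTree

variable {n : ℕ}

lemma cost_le_depth (T : DTree n) (x : Fin n → Bool) : T.cost x ≤ T.depth := by
  induction T with
  | leaf b => simp [cost, depth]
  | node i t0 t1 ih0 ih1 =>
    simp only [cost, depth]
    split <;> omega

def queryThen (k : (Fin n → Option Bool) → DTree n) :
    List (Fin n) → (Fin n → Option Bool) → DTree n
  | [], ρ => k ρ
  | i :: L, ρ => node i (queryThen k L (Function.update ρ i (some false)))
                        (queryThen k L (Function.update ρ i (some true)))

lemma eval_queryThen (k : (Fin n → Option Bool) → DTree n) (L : List (Fin n))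
    (ρ : Fin n → Option Bool) (x : Fin n → Bool) :
    (queryThen k L ρ).eval x = (k (fixAlong L x ρ)).eval x := by
  induction L generalizing ρ with
  | nil => simp [queryThen]
  | cons i L ih => cases hx : x i <;> simp [queryThen, eval, fixAlong_cons, hx, ih]

lemma cost_queryThen (k : (Fin n → Option Bool) → DTree n) (L : List (Fin n))
    (ρ : Fin n → Option Bool) (x : Fin n → Bool) :
    (queryThen k L ρ).cost x = L.length + (k (fixAlong L x ρ)).cost x := by
  induction L generalizing ρ with
  | nil => simp [queryThen]
  | cons i L ih =>
    cases hx : x i <;>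
      simp only [queryThen, cost, fixAlong_cons, hx, ih, Bool.false_eq_true, ↓reduceIte,
        List.length_cons] <;> omega

lemma depth_queryThen_le {k : (Fin n → Option Bool) → DTree n} {d : ℕ}
    (hk : ∀ ρ, (k ρ).depth ≤ d) (L : List (Fin n)) (ρ : Fin n → Option Bool) :
    (queryThen k L ρ).depth ≤ L.length + d := by
  induction L generalizing ρ with
  | nil => simpa [queryThen] using hk ρ
  | cons i L ih =>
    simp only [queryThen, depth, List.length_cons]
    have := ih (Function.update ρ i (some false))
    have := ih (Function.update ρ i (some true))
    omega

end DTree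

section Complexity

variable {n : ℕ}

lemma exists_computes_depth_le (f : (Fin n → Bool) → Bool) :
    ∃ T : DTree n, Computes T f ∧ T.depth ≤ n := by
  refine ⟨.queryThen (fun ρ => .leaf (f fun i => (ρ i).getD false)) (List.finRange n)
    (fun _ => none), fun x => ?_, ?_⟩
  · simp [DTree.eval_queryThen, DTree.eval, fixAlong]
  · simpa using DTree.depth_queryThen_le (d := 0) (fun _ => le_rfl) (List.finRange n) _

lemma Dworst_le (f : (Fin n → Bool) → Bool) : Dworst f ≤ n := by
  obtain ⟨T, hT, hd⟩ := exists_computes_depth_le f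
  exact (Nat.sInf_le (s := {d | ∃ T : DTree n, Computes T f ∧ T.depth = d}) ⟨T, hT, rfl⟩).trans
    hd

lemma exists_computes_depth_eq_Dworst (f : (Fin n → Bool) → Bool) :
    ∃ T : DTree n, Computes T f ∧ T.depth = Dworst f := by
  obtain ⟨T, hT, -⟩ := exists_computes_depth_le f
  exact Nat.sInf_mem (s := {d | ∃ T : DTree n, Computes T f ∧ T.depth = d}) ⟨_, T, hT, rfl⟩

lemma Dave_le_avgCost {f : (Fin n → Bool) → Bool} {T : DTree n} (hT : Computes T f) :
    Dave f ≤ avgCost T :=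
  csInf_le ⟨0, by rintro _ ⟨T', -, rfl⟩; unfold avgCost; positivity⟩ ⟨T, hT, rfl⟩

end Complexity

section Strategy

variable {n : ℕ}

def restrictionOf (s x : Fin n → Bool) : Fin n → Option Bool :=
  fun i => if s i then some (x i) else none

noncomputable def queryCost (f : (Fin n → Bool) → Bool) (ρ : Fin n → Option Bool) : ℝ :=
  suppCard ρ + Dworst (restrictFun f ρ)

lemma restrictFun_restrictionOf_self (f : (Fin n → Bool) → Bool) (s x : Fin n → Bool) :
    restrictFun f (restrictionOf s x) x = f x := by
  unfold restrictFun restrictionOf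
  congr 1
  funext i
  split <;> rfl

lemma suppCard_restrictionOf (s x : Fin n → Bool) :
    suppCard (restrictionOf s x) = #{i | s i = true} := by
  unfold suppCard restrictionOf
  congr 1
  ext i
  cases s i <;> simp

lemma Dave_le_avg_queryCost (f : (Fin n → Bool) → Bool) (s : Fin n → Bool) :
    Dave f ≤ (∑ x, queryCost f (restrictionOf s x)) / 2 ^ n := by
  choose k hk_computes hk_depth using fun ρ => exists_computes_depth_eq_Dworst (restrictFun f ρ)
  set L := (univ.filter fun i => s i = true).toList
  have hL : ∀ x, fixAlong L x (fun _ => none) = restrictionOf s x := by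
    intro x
    funext i
    simp [L, fixAlong, restrictionOf]
  let T := DTree.queryThen k L (fun _ => none)
  have hT : Computes T f := fun x => by
    rw [DTree.eval_queryThen, hL, hk_computes, restrictFun_restrictionOf_self]
  have hcost : ∀ x, (T.cost x : ℝ) ≤ queryCost f (restrictionOf s x) := fun x => by
    have := (k (restrictionOf s x)).cost_le_depth x
    rw [hk_depth] at this
    rw [DTree.cost_queryThen, hL, queryCost, suppCard_restrictionOf, ← length_toList]
    push_cast
    gcongr
  calc Dave f ≤ avgCost T := Dave_le_avgCost hT
    _ ≤ _ := by unfold avgCost; gcongr with x; exact hcost x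

end Strategy

section RandomRestriction

variable {n : ℕ}

lemma rpMass_nonneg {p : ℝ} (hp0 : 0 ≤ p) (hp1 : p ≤ 1) (ρ : Fin n → Option Bool) :
    0 ≤ rpMass p ρ :=
  prod_nonneg fun i _ => by split <;> linarith

lemma sum_rpMass_mul_suppCard (p : ℝ) :
    ∑ ρ : Fin n → Option Bool, rpMass p ρ * suppCard ρ = n * (1 - p) := by
  have hw : ∑ c : Option Bool, (if c.isSome then (1 - p) / 2 else p) = 1 := by
    simp only [Fintype.sum_option, Fintype.sum_bool]
    norm_num
  calc ∑ ρ : Fin n → Option Bool, rpMass p ρ * suppCard ρ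
      = ∑ i, ∑ ρ : Fin n → Option Bool, rpMass p ρ * (if (ρ i).isSome then 1 else 0) := by
        simp only [suppCard, natCast_card_filter, mul_sum]
        exact sum_comm
    _ = ∑ _i : Fin n, (1 - p) := by
        refine sum_congr rfl fun i _ =>
          (sum_prod_mul_apply hw (fun c : Option Bool => if c.isSome then 1 else 0) i).trans ?_
        simp [Fintype.sum_option, mul_div_cancel₀]
    _ = n * (1 - p) := by simp [mul_sub]

lemma sum_rpMass_mul_Dworst_le {lam p : ℝ} {f : (Fin n → Bool) → Bool} (hc : IsCritical lam f)
    (hp0 : 0 ≤ p) (hp1 : p ≤ 1) :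
    ∑ ρ : Fin n → Option Bool, rpMass p ρ * Dworst (restrictFun f ρ)
      ≤ ∑ t ∈ Icc 1 n, (p * lam) ^ t :=
  calc ∑ ρ : Fin n → Option Bool, rpMass p ρ * Dworst (restrictFun f ρ)
      = ∑ t ∈ Icc 1 n, ∑ ρ : Fin n → Option Bool,
          if t ≤ Dworst (restrictFun f ρ) then rpMass p ρ else 0 := by
        rw [sum_comm]
        refine sum_congr rfl fun ρ _ => ?_
        rw [mul_comm]
        exact natCast_mul_eq_sum_Icc_ite (Dworst_le _) _
    _ ≤ ∑ t ∈ Icc 1 n, (p * lam) ^ t := sum_le_sum fun t _ => hc p hp0 hp1 t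

lemma IsCritical.nonneg {lam : ℝ} {f : (Fin n → Bool) → Bool} (hc : IsCritical lam f) :
    0 ≤ lam := by
  have hsum : 0 ≤ ∑ ρ : Fin n → Option Bool,
      if 1 ≤ Dworst (restrictFun f ρ) then rpMass 1 ρ else 0 :=
    sum_nonneg fun ρ _ => by
      split
      · exact rpMass_nonneg zero_le_one le_rfl ρ
      · exact le_rfl
  simpa using hsum.trans (hc 1 zero_le_one le_rfl 1)

noncomputable def patternMass (p : ℝ) (s : Fin n → Bool) : ℝ :=
  ∏ i, if s i then 1 - p else p

lemma patternMass_nonneg {p : ℝ} (hp0 : 0 ≤ p) (hp1 : p ≤ 1) (s : Fin n → Bool) :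
    0 ≤ patternMass p s :=
  prod_nonneg fun i _ => by split <;> linarith

lemma sum_patternMass (p : ℝ) : ∑ s : Fin n → Bool, patternMass p s = 1 :=
  sum_prod_eq_one (w := fun b : Bool => if b then 1 - p else p) (by simp)

lemma sum_rpMass_mul_eq (p : ℝ) (A : (Fin n → Option Bool) → ℝ) :
    ∑ ρ, rpMass p ρ * A ρ
      = ∑ s, patternMass p s * ((∑ x, A (restrictionOf s x)) / 2 ^ n) := by
  -- `ρ i = e (s i, x i)`, and the pair `(s, x)` carries mass `patternMass p s / 2 ^ n`
  let e : Bool × Bool → Option Bool := fun b => if b.1 then some b.2 else none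
  have hfiber : ∀ c, ∑ b with e b = c, (if b.1 then 1 - p else p) / 2
      = if c.isSome then (1 - p) / 2 else p := by
    rintro (_ | _ | _) <;> simp [e, sum_filter, Fintype.sum_prod_type]
  simp only [rpMass]
  rw [← sum_prod_mul_comp_eq e _ _ hfiber A,
    ← (Equiv.arrowProdEquivProdArrow (Fin n) (fun _ => Bool) (fun _ => Bool)).symm.sum_comp,
    Fintype.sum_prod_type]
  refine sum_congr rfl fun s _ => ?_
  have hmass : ∏ i, (if s i then 1 - p else p) / 2 = patternMass p s / 2 ^ n := by
    simp [prod_div_distrib, patternMass]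
  change ∑ x, (∏ i, (if s i then 1 - p else p) / 2) * A (restrictionOf s x) = _
  rw [hmass, ← mul_sum]
  ring

lemma Dave_le_sum_rpMass_mul_queryCost (f : (Fin n → Bool) → Bool) {p : ℝ}
    (hp0 : 0 ≤ p) (hp1 : p ≤ 1) :
    Dave f ≤ ∑ ρ, rpMass p ρ * queryCost f ρ :=
  calc Dave f = ∑ s : Fin n → Bool, patternMass p s * Dave f := by
        rw [← sum_mul, sum_patternMass, one_mul]
    _ ≤ ∑ s, patternMass p s * ((∑ x, queryCost f (restrictionOf s x)) / 2 ^ n) :=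
        sum_le_sum fun s _ =>
          mul_le_mul_of_nonneg_left (Dave_le_avg_queryCost f s) (patternMass_nonneg hp0 hp1 s)
    _ = ∑ ρ, rpMass p ρ * queryCost f ρ := (sum_rpMass_mul_eq p _).symm

end RandomRestriction

theorem stmt13 (n : ℕ) (lam p : ℝ) (f : (Fin n → Bool) → Bool)
    (hc : IsCritical lam f) (hp0 : 0 ≤ p) (hp1 : p ≤ 1) :
    ((∑ ρ : Fin n → Option Bool,
        rpMass p ρ * ((suppCard ρ : ℝ) + (Dworst (restrictFun f ρ) : ℝ)))
      ≤ n * (1 - p) + ∑ t ∈ Finset.Icc 1 n, (p * lam) ^ t) ∧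
    (p * lam < 1 → Dave f ≤ n * (1 - p) + p * lam / (1 - p * lam)) := by
  have hexpected : ∑ ρ, rpMass p ρ * queryCost f ρ
      ≤ n * (1 - p) + ∑ t ∈ Icc 1 n, (p * lam) ^ t := by
    simp only [queryCost, mul_add, sum_add_distrib, sum_rpMass_mul_suppCard]
    gcongr
    exact sum_rpMass_mul_Dworst_le hc hp0 hp1
  refine ⟨hexpected, fun hq1 => ?_⟩
  calc Dave f ≤ ∑ ρ, rpMass p ρ * queryCost f ρ := Dave_le_sum_rpMass_mul_queryCost f hp0 hp1
    _ ≤ n * (1 - p) + ∑ t ∈ Icc 1 n, (p * lam) ^ t := hexpected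
    _ ≤ n * (1 - p) + p * lam / (1 - p * lam) := by
        gcongr
        exact sum_Icc_one_pow_le (mul_nonneg hp0 hc.nonneg) hq1 n
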